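/- Fix an integer h ≥ 2, let 1 ≤ k, l ≤ h−1 and i, j ∈ ℤ. Then dim_ℂ Hom(M_{k,i}, M_{l,j}) = 1 if max(i, k+i−l) ≤ j ≤ min(k+i−1, h+i−l−1), and dim_ℂ Hom(M_{k,i}, M_{l,j}) = 0 otherwise. In particular, all Hom-spaces between the objects M_{l,i} are at most one-dimensional. -/

import Mathlib

open Polynomial

noncomputable section

/-- Polynomials in `ℂ[x]` that are homogeneous (monomial) of degree `d ∈ ℤ`; by
convention this is `{0}` when `d < 0` or when no monomial of that degree exists. -/
def homogDeg (d : ℤ) : Submodule ℂ (Polynomial ℂ) where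
  carrier := {p | ∀ n : ℕ, p.coeff n ≠ 0 → (n : ℤ) = d}
  zero_mem' := by intro n hn; simp at hn
  add_mem' := by
    intro p q hp hq n hn
    rw [Polynomial.coeff_add] at hn
    by_cases h1 : p.coeff n = 0
    · exact hq n (by simpa [h1] using hn)
    · exact hp n h1
  smul_mem' := by
    intro c p hp n hn
    rw [Polynomial.coeff_smul, smul_eq_mul] at hn
    exact hp n (right_ne_zero_of_mul hn)

/-- The submodule of pairs `(p, q)` intertwining `Q_k` and `Q_l`:
`x^l·p = x^k·q` and `x^{h−l}·q = x^{h−k}·p`. -/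
def intertwine (h k l : ℕ) : Submodule ℂ (Polynomial ℂ × Polynomial ℂ) where
  carrier := {pq | X ^ l * pq.1 = X ^ k * pq.2 ∧ X ^ (h - l) * pq.2 = X ^ (h - k) * pq.1}
  zero_mem' := by simp
  add_mem' := by
    rintro a b ⟨ha1, ha2⟩ ⟨hb1, hb2⟩
    constructor <;> simp [mul_add, ha1, ha2, hb1, hb2]
  smul_mem' := by
    rintro c a ⟨ha1, ha2⟩
    constructor <;> simp [Algebra.mul_smul_comm, ha1, ha2]

/-- The closed degree-0 graded morphisms from `M_{k,i}` to `M_{l,j}`: pairs `(p, q)` of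
homogeneous polynomials of degrees `j−i` and `(l+j)−(k+i)` with `Q_l·diag(p,q) = diag(p,q)·Q_k`. -/
def closedMor (h k l : ℕ) (i j : ℤ) : Submodule ℂ (Polynomial ℂ × Polynomial ℂ) :=
  ((homogDeg (j - i)).prod (homogDeg (((l : ℤ) + j) - ((k : ℤ) + i)))) ⊓ intertwine h k l

/-- The linear map sending a homotopy `(ψ₁, ψ₂)` to the null-homotopic morphism
`(x^{h−l}·ψ₂ + x^k·ψ₁, x^l·ψ₁ + x^{h−k}·ψ₂)`. -/
def htpyMap (h k l : ℕ) : (Polynomial ℂ × Polynomial ℂ) →ₗ[ℂ] (Polynomial ℂ × Polynomial ℂ) where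
  toFun ψ := (X ^ (h - l) * ψ.2 + X ^ k * ψ.1, X ^ l * ψ.1 + X ^ (h - k) * ψ.2)
  map_add' := by
    intro a b
    simp only [Prod.fst_add, Prod.snd_add, mul_add, Prod.mk_add_mk]
    exact Prod.ext (by ring) (by ring)
  map_smul' := by
    intro c a
    simp only [Prod.smul_fst, Prod.smul_snd, Algebra.mul_smul_comm, RingHom.id_apply,
      Prod.smul_mk, smul_add]

/-- The null-homotopic degree-0 graded morphisms from `M_{k,i}` to `M_{l,j}`: those of the
form `(x^{h−l}·ψ₂ + x^k·ψ₁, x^l·ψ₁ + x^{h−k}·ψ₂)` for homogeneous `ψ₁, ψ₂` of degrees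
`j−(k+i)` and `(l+j)−i−h`. -/
def nullHtpyMor (h k l : ℕ) (i j : ℤ) : Submodule ℂ (Polynomial ℂ × Polynomial ℂ) :=
  Submodule.map (htpyMap h k l)
    ((homogDeg (j - ((k : ℤ) + i))).prod (homogDeg (((l : ℤ) + j) - i - (h : ℤ))))

/-- `Hom(M_{k,i}, M_{l,j})` in `D^b_ℤ(𝒜_{x^h})`: closed degree-0 graded morphisms modulo
null-homotopic ones. -/
abbrev HomMF (h k l : ℕ) (i j : ℤ) : Type :=
  closedMor h k l i j ⧸ ((nullHtpyMor h k l i j).comap (closedMor h k l i j).subtype)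

/-!
Everything is graded by powers of `x`, so every homogeneous component is at most one-dimensional.
A closed morphism is a pair `(c·x^a, d·x^b)` with `a = j − i`, `b = l + j − k − i`, and the
intertwining relation `x^l·p = x^k·q` forces `c = d`: the closed morphisms form the line spanned by
`(x^a, x^b)` when `a, b ≥ 0`, and vanish otherwise. The homotopies `(x^m, 0)` and `(0, x^m)` both
hit this generator, and one of them has nonnegative degree as soon as `j ≥ k + i` or
`j ≥ h + i − l`; below both bounds nothing nonzero is null-homotopic.
-/

theorem mem_homogDeg {d : ℤ} {p : ℂ[X]} :
    p ∈ homogDeg d ↔ ∀ n : ℕ, p.coeff n ≠ 0 → (n : ℤ) = d :=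
  Iff.rfl

theorem homogDeg_of_neg {d : ℤ} (hd : d < 0) : homogDeg d = ⊥ :=
  (Submodule.eq_bot_iff _).2 fun p hp => Polynomial.ext fun n => by
    by_contra hn
    have := mem_homogDeg.1 hp n hn
    omega

theorem homogDeg_natCast (n : ℕ) : homogDeg n = ℂ ∙ (X ^ n : ℂ[X]) := by
  ext p
  rw [Submodule.mem_span_singleton, mem_homogDeg]
  constructor
  · intro hp
    refine ⟨p.coeff n, Polynomial.ext fun m => ?_⟩
    rw [coeff_smul, coeff_X_pow, smul_eq_mul]
    split_ifs with hmn
    · rw [hmn, mul_one]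
    · rw [mul_zero, eq_comm]
      by_contra hm
      exact hmn (by exact_mod_cast hp m hm)
  · rintro ⟨c, rfl⟩ m hm
    rw [coeff_smul, coeff_X_pow] at hm
    split_ifs at hm with hmn
    · exact_mod_cast hmn
    · simp at hm

/-- Multiplied by `x^{k+l}`, the second intertwining equation becomes `x^h·x^k·q = x^h·x^l·p`,
a multiple of the first. -/
theorem mem_intertwine_iff {h k l : ℕ} (hk : k ≤ h) (hl : l ≤ h) {pq : ℂ[X] × ℂ[X]} :
    pq ∈ intertwine h k l ↔ X ^ l * pq.1 = X ^ k * pq.2 := by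
  refine ⟨And.left, fun hpq => ⟨hpq, ?_⟩⟩
  refine (isRegular_X_pow (k + l)).left ?_
  calc X ^ (k + l) * (X ^ (h - l) * pq.2) = X ^ h * (X ^ k * pq.2) := by
        rw [← mul_assoc, ← mul_assoc, ← pow_add, ← pow_add]
        congr 2
        omega
    _ = X ^ h * (X ^ l * pq.1) := by rw [hpq]
    _ = X ^ (k + l) * (X ^ (h - k) * pq.1) := by
        rw [← mul_assoc, ← mul_assoc, ← pow_add, ← pow_add]
        congr 2
        omega

section Morphisms

variable {h k l : ℕ} {i j : ℤ}

theorem closedMor_eq_span (hk : k ≤ h) (hl : l ≤ h) {a b : ℕ} (ha : j - i = a)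
    (hb : (l : ℤ) + j - (k + i) = b) :
    closedMor h k l i j = ℂ ∙ ((X ^ a, X ^ b) : ℂ[X] × ℂ[X]) := by
  have hab : l + a = k + b := by omega
  ext ⟨p, q⟩
  simp only [closedMor, Submodule.mem_inf, Submodule.mem_prod, ha, hb, homogDeg_natCast,
    Submodule.mem_span_singleton, mem_intertwine_iff hk hl, Prod.smul_mk, Prod.mk.injEq]
  constructor
  · rintro ⟨⟨⟨c, rfl⟩, ⟨d, rfl⟩⟩, hcd⟩
    have hcd' : c • (X ^ (l + a) : ℂ[X]) = d • X ^ (l + a) := by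
      rw [pow_add, ← mul_smul_comm, hcd, mul_smul_comm, ← pow_add, ← pow_add, hab]
    exact ⟨c, rfl, by rw [smul_left_injective ℂ (pow_ne_zero _ X_ne_zero) hcd']⟩
  · rintro ⟨c, rfl, rfl⟩
    refine ⟨⟨⟨c, rfl⟩, ⟨c, rfl⟩⟩, ?_⟩
    rw [mul_smul_comm, mul_smul_comm, ← pow_add, ← pow_add, hab]

theorem closedMor_eq_bot (hd : j - i < 0 ∨ (l : ℤ) + j - (k + i) < 0) :
    closedMor h k l i j = ⊥ := by
  refine (Submodule.eq_bot_iff _).2 fun ⟨p, q⟩ ⟨⟨hp, hq⟩, hpq, _⟩ => ?_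
  rcases hd with hd | hd
  · obtain rfl : p = 0 := (Submodule.mem_bot ℂ).1 (homogDeg_of_neg hd ▸ hp)
    obtain rfl : q = 0 := (isRegular_X_pow k).left (by simpa using hpq.symm)
    rfl
  · obtain rfl : q = 0 := (Submodule.mem_bot ℂ).1 (homogDeg_of_neg hd ▸ hq)
    obtain rfl : p = 0 := (isRegular_X_pow l).left (by simpa using hpq)
    rfl

theorem nullHtpyMor_eq_bot (h₁ : j - (k + i) < 0) (h₂ : (l : ℤ) + j - i - h < 0) :
    nullHtpyMor h k l i j = ⊥ := by
  rw [nullHtpyMor, homogDeg_of_neg h₁, homogDeg_of_neg h₂, Submodule.prod_bot,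
    Submodule.map_bot]

theorem X_pow_mem_nullHtpyMor (hk : k ≤ h) (hl : l ≤ h) {a b : ℕ} (ha : j - i = a)
    (hb : (l : ℤ) + j - (k + i) = b) (he : 0 ≤ j - (k + i) ∨ 0 ≤ (l : ℤ) + j - i - h) :
    ((X ^ a, X ^ b) : ℂ[X] × ℂ[X]) ∈ nullHtpyMor h k l i j := by
  rcases he with he | he
  · obtain ⟨m, hm⟩ := Int.eq_ofNat_of_zero_le he
    refine Submodule.mem_map.2 ⟨(X ^ m, 0), Submodule.mem_prod.2 ⟨?_, zero_mem _⟩, ?_⟩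
    · rw [hm, homogDeg_natCast]
      exact Submodule.mem_span_singleton_self _
    simp only [htpyMap, LinearMap.coe_mk, AddHom.coe_mk, mul_zero, zero_add, add_zero,
      ← pow_add, Prod.mk.injEq]
    constructor <;> congr 1 <;> omega
  · obtain ⟨m, hm⟩ := Int.eq_ofNat_of_zero_le he
    refine Submodule.mem_map.2 ⟨(0, X ^ m), Submodule.mem_prod.2 ⟨zero_mem _, ?_⟩, ?_⟩
    · rw [hm, homogDeg_natCast]
      exact Submodule.mem_span_singleton_self _
    simp only [htpyMap, LinearMap.coe_mk, AddHom.coe_mk, mul_zero, zero_add, add_zero,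
      ← pow_add, Prod.mk.injEq]
    constructor <;> congr 1 <;> omega

theorem finrank_homMF_of_nullHtpyMor_eq_bot (hnull : nullHtpyMor h k l i j = ⊥) :
    Module.finrank ℂ (HomMF h k l i j) = Module.finrank ℂ (closedMor h k l i j) :=
  (Submodule.quotEquivOfEqBot _ <| by
    rw [hnull, Submodule.comap_bot, Submodule.ker_subtype]).finrank_eq

theorem finrank_homMF_of_closedMor_le (hle : closedMor h k l i j ≤ nullHtpyMor h k l i j) :
    Module.finrank ℂ (HomMF h k l i j) = 0 := by
  have : Subsingleton (HomMF h k l i j) :=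
    Submodule.Quotient.subsingleton_iff.2 (Submodule.comap_subtype_eq_top.2 hle)
  exact Module.finrank_zero_of_subsingleton

end Morphisms

theorem hom_dimension_formula_general (h : ℕ) (k l : ℕ)
    (hk' : k ≤ h - 1) (hl' : l ≤ h - 1) (i j : ℤ) :
    Module.finrank ℂ (HomMF h k l i j) =
      if max i ((k : ℤ) + i - (l : ℤ)) ≤ j ∧
          j ≤ min ((k : ℤ) + i - 1) ((h : ℤ) + i - (l : ℤ) - 1)
        then 1 else 0 := by
  have hk : k ≤ h := hk'.trans (Nat.sub_le h 1)
  have hl : l ≤ h := hl'.trans (Nat.sub_le h 1)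
  by_cases hdeg : i ≤ j ∧ (k : ℤ) + i - l ≤ j
  · obtain ⟨a, ha⟩ := Int.eq_ofNat_of_zero_le (by omega : 0 ≤ j - i)
    obtain ⟨b, hb⟩ := Int.eq_ofNat_of_zero_le (by omega : 0 ≤ (l : ℤ) + j - (k + i))
    split_ifs with hwindow
    · rw [finrank_homMF_of_nullHtpyMor_eq_bot (nullHtpyMor_eq_bot (by omega) (by omega)),
        closedMor_eq_span hk hl ha hb, finrank_span_singleton (by simp)]
    · refine finrank_homMF_of_closedMor_le ?_
      rw [closedMor_eq_span hk hl ha hb, Submodule.span_singleton_le_iff_mem]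
      exact X_pow_mem_nullHtpyMor hk hl ha hb (by omega)
  · rw [if_neg (by omega)]
    exact finrank_homMF_of_closedMor_le ((closedMor_eq_bot (by omega)).trans_le bot_le)

/-- The complete dimension formula for Hom-spaces between the indecomposable graded
matrix factorizations of `x^h`: `dim_ℂ Hom(M_{k,i}, M_{l,j}) = 1` if
`max(i, k+i−l) ≤ j ≤ min(k+i−1, h+i−l−1)`, and `0` otherwise. -/
theorem hom_dimension_formula (h : ℕ) (hh : 2 ≤ h) (k l : ℕ)
    (hk : 1 ≤ k) (hk' : k ≤ h - 1) (hl : 1 ≤ l) (hl' : l ≤ h - 1) (i j : ℤ) :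
    Module.finrank ℂ (HomMF h k l i j) =
      if max i ((k : ℤ) + i - (l : ℤ)) ≤ j ∧
          j ≤ min ((k : ℤ) + i - 1) ((h : ℤ) + i - (l : ℤ) - 1)
        then 1 else 0 :=
  hom_dimension_formula_general h k l hk' hl' i j
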